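/- arXiv:2003.07104 — 6 statements merged into one kernel-verified Lean document; each statement's English description precedes it below -/
import Mathlib

section
/- Let A, B be vectors of non-negative integers indexed by {0,…,n}, and for ℓ ≥ 0 let Aℓ[i] = ⌊A[i]/2^ℓ⌋, Bℓ[j] = ⌊B[j]/2^ℓ⌋ and Cℓ[k] = max_{i+j=k} min{Aℓ[i], Bℓ[j] + ⌊k/2^ℓ⌋}. Then for all k ∈ {0,…,2n}: Cℓ[k] − 2 ≤ 2·C^{ℓ+1}[k] ≤ Cℓ[k]. -/
/-- `Cℓ[k] = max_{i+j=k} min{⌊A[i]/2^ℓ⌋, ⌊B[j]/2^ℓ⌋ + ⌊k/2^ℓ⌋}`, the level-`ℓ` rounded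
`(max,min)`-skewed-convolution of `A` and `B`. -/
def roundedSkewConv (n : ℕ) (A B : Fin (n + 1) → ℕ) (ℓ k : ℕ) : ℕ :=
  (Finset.univ.filter (fun p : Fin (n + 1) × Fin (n + 1) => (p.1 : ℕ) + (p.2 : ℕ) = k)).sup
    (fun p => min (A p.1 / 2 ^ ℓ) (B p.2 / 2 ^ ℓ + k / 2 ^ ℓ))

/-- For all `k ∈ {0,…,2n}`: `Cℓ[k] − 2 ≤ 2·C^{ℓ+1}[k] ≤ Cℓ[k]`. -/
theorem roundedSkewConv_approx (n : ℕ) (A B : Fin (n + 1) → ℕ) (ℓ k : ℕ) (hk : k ≤ 2 * n) :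
    roundedSkewConv n A B ℓ k - 2 ≤ 2 * roundedSkewConv n A B (ℓ + 1) k ∧
      2 * roundedSkewConv n A B (ℓ + 1) k ≤ roundedSkewConv n A B ℓ k := by
  set s := (Finset.univ.filter
    (fun p : Fin (n + 1) × Fin (n + 1) => (p.1 : ℕ) + (p.2 : ℕ) = k)) with hs
  have hdiv : ∀ x : ℕ, x / 2 ^ (ℓ + 1) = x / 2 ^ ℓ / 2 := by
    intro x
    rw [pow_succ, Nat.div_div_eq_div_mul]
  have hne : s.Nonempty := by
    refine ⟨(⟨min k n, ?_⟩, ⟨k - min k n, ?_⟩), ?_⟩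
    · exact Nat.lt_succ_of_le (min_le_right _ _)
    · rcases le_total k n with h | h
      · simp [min_eq_left h]
      · rw [min_eq_right h]
        omega
    · simp only [hs, Finset.mem_filter, Finset.mem_univ, true_and]
      omega
  -- pointwise bounds
  have key : ∀ p : Fin (n + 1) × Fin (n + 1),
      2 * min (A p.1 / 2 ^ (ℓ + 1)) (B p.2 / 2 ^ (ℓ + 1) + k / 2 ^ (ℓ + 1)) ≤
        min (A p.1 / 2 ^ ℓ) (B p.2 / 2 ^ ℓ + k / 2 ^ ℓ) ∧
      min (A p.1 / 2 ^ ℓ) (B p.2 / 2 ^ ℓ + k / 2 ^ ℓ) ≤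
        2 * min (A p.1 / 2 ^ (ℓ + 1)) (B p.2 / 2 ^ (ℓ + 1) + k / 2 ^ (ℓ + 1)) + 2 := by
    intro p
    rw [hdiv, hdiv, hdiv]
    set a := A p.1 / 2 ^ ℓ
    set b := B p.2 / 2 ^ ℓ
    set c := k / 2 ^ ℓ
    omega
  obtain ⟨p1, hp1, hp1e⟩ := Finset.exists_mem_eq_sup s hne
    (fun p => min (A p.1 / 2 ^ ℓ) (B p.2 / 2 ^ ℓ + k / 2 ^ ℓ))
  obtain ⟨p2, hp2, hp2e⟩ := Finset.exists_mem_eq_sup s hne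
    (fun p => min (A p.1 / 2 ^ (ℓ + 1)) (B p.2 / 2 ^ (ℓ + 1) + k / 2 ^ (ℓ + 1)))
  constructor
  · have h1 := (key p1).2
    have h2 : min (A p1.1 / 2 ^ (ℓ + 1)) (B p1.2 / 2 ^ (ℓ + 1) + k / 2 ^ (ℓ + 1)) ≤
        roundedSkewConv n A B (ℓ + 1) k :=
      Finset.le_sup (f := fun p => min (A p.1 / 2 ^ (ℓ + 1))
        (B p.2 / 2 ^ (ℓ + 1) + k / 2 ^ (ℓ + 1))) hp1
    rw [roundedSkewConv, ← hs, hp1e]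
    omega
  · have h1 := (key p2).1
    have h2 : min (A p2.1 / 2 ^ ℓ) (B p2.2 / 2 ^ ℓ + k / 2 ^ ℓ) ≤
        roundedSkewConv n A B ℓ k :=
      Finset.le_sup (f := fun p => min (A p.1 / 2 ^ ℓ) (B p.2 / 2 ^ ℓ + k / 2 ^ ℓ)) hp2
    rw [roundedSkewConv, ← hs, hp2e]
    omega
end

section
/- Let A, B, C be vectors indexed appropriately with C[k] = max_{i+j=k} min{A[i], B[j] + k} (the (max,min)-skewed-convolution), and let D be a vector satisfying C[k] − 2 ≤ D[k] ≤ C[k] for all k. Define L[k] = max{A[i] : i + j = k, A[i] ≤ B[j] + k, D[k] ≤ A[i] ≤ D[k] + 2} and R[k] = max{B[j] + k : i + j = k, B[j] + k ≤ A[i], D[k] ≤ B[j] + k ≤ D[k] + 2} (each being −∞ if the set is empty). Then C[k] = max{L[k], R[k]} for every k. -/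
/-- If `C[k] = max_{i+j=k} min{A[i], B[j] + k}` is the skewed convolution and
`D` is a good approximation of `C` (`C[k] − 2 ≤ D[k] ≤ C[k]`), then with
`L[k] = max{A[i] : i+j=k, A[i] ≤ B[j]+k, D[k] ≤ A[i] ≤ D[k]+2}` and
`R[k] = max{B[j]+k : i+j=k, B[j]+k ≤ A[i], D[k] ≤ B[j]+k ≤ D[k]+2}`
(each `−∞` if empty), we have `C[k] = max{L[k], R[k]}`. -/
theorem skewed_conv_LR (n : ℕ) (A B : Fin (n + 1) → ℤ) (C D : ℕ → ℤ)
    (hC : ∀ k ≤ 2 * n, IsGreatest {v : ℤ | ∃ i j : Fin (n + 1), (i : ℕ) + (j : ℕ) = k ∧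
          v = min (A i) (B j + (k : ℤ))} (C k))
    (hD : ∀ k ≤ 2 * n, C k - 2 ≤ D k ∧ D k ≤ C k) :
    ∀ k ≤ 2 * n,
      (C k : WithBot ℤ) =
        max
          ((Finset.univ.filter (fun p : Fin (n + 1) × Fin (n + 1) =>
              (p.1 : ℕ) + (p.2 : ℕ) = k ∧ A p.1 ≤ B p.2 + (k : ℤ) ∧
                D k ≤ A p.1 ∧ A p.1 ≤ D k + 2)).sup (fun p => (A p.1 : WithBot ℤ)))
          ((Finset.univ.filter (fun p : Fin (n + 1) × Fin (n + 1) =>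
              (p.1 : ℕ) + (p.2 : ℕ) = k ∧ B p.2 + (k : ℤ) ≤ A p.1 ∧
                D k ≤ B p.2 + (k : ℤ) ∧ B p.2 + (k : ℤ) ≤ D k + 2)).sup
            (fun p => ((B p.2 + (k : ℤ)) : WithBot ℤ))) := by
  intro k hk
  obtain ⟨hmem, hub⟩ := hC k hk
  obtain ⟨hD1, hD2⟩ := hD k hk
  obtain ⟨i, j, hij, hv⟩ := hmem
  apply le_antisymm
  · rcases le_total (A i) (B j + (k : ℤ)) with h | h
    · have hA : A i = C k := by rw [hv, min_eq_left h]
      calc (C k : WithBot ℤ) = (A i : WithBot ℤ) := by rw [hA]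
        _ ≤ _ := le_trans (Finset.le_sup (f := fun p : Fin (n+1) × Fin (n+1) => (A p.1 : WithBot ℤ))
            (Finset.mem_filter.mpr ⟨Finset.mem_univ (i, j), hij, h,
              by show D k ≤ A i; omega, by show A i ≤ D k + 2; omega⟩))
            (le_max_left _ _)
    · have hA : B j + (k : ℤ) = C k := by rw [hv, min_eq_right h]
      calc (C k : WithBot ℤ) = ((B j + (k : ℤ)) : WithBot ℤ) := by exact_mod_cast hA.symm
        _ ≤ _ := le_trans (Finset.le_sup (f := fun p : Fin (n+1) × Fin (n+1) => ((B p.2 + (k : ℤ)) : WithBot ℤ))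
            (Finset.mem_filter.mpr ⟨Finset.mem_univ (i, j), hij, h,
              by show D k ≤ B j + (k : ℤ); omega, by show B j + (k : ℤ) ≤ D k + 2; omega⟩))
            (le_max_right _ _)
  · apply max_le
    · apply Finset.sup_le
      intro p hp
      obtain ⟨-, hpk, hle, -, -⟩ := Finset.mem_filter.mp hp
      have := hub ⟨p.1, p.2, hpk, rfl⟩
      have h2 : A p.1 ≤ C k := by rw [← min_eq_left hle]; exact this
      exact_mod_cast h2
    · apply Finset.sup_le
      intro p hp
      obtain ⟨-, hpk, hle, -, -⟩ := Finset.mem_filter.mp hp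
      have := hub ⟨p.1, p.2, hpk, rfl⟩
      have h2 : B p.2 + (k : ℤ) ≤ C k := by rw [← min_eq_right hle]; exact this
      exact_mod_cast h2
end

section
/- Let A and B be vectors of non-negative integers indexed by {0,…,n}, each entry bounded by n, and let N = 2n + 1. Define A₀[i] = N·A[i] and B₀[j] = N·B[j], and let C₀[k] = max_{i+j=k} min{A₀[i], B₀[j] + k} be their (max,min)-skewed-convolution. Then ⌊C₀[k]/N⌋ = max_{i+j=k} min{A[i], B[j]} for all k ∈ {0,…,2n}, i.e., scaling reduces (max,min)-convolution to (max,min)-skewed-convolution. -/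
lemma key_div (n a b k : ℕ) (hk : k ≤ 2 * n) :
    min ((2 * n + 1) * a) ((2 * n + 1) * b + k) / (2 * n + 1) = min a b := by
  rcases le_or_gt a b with h | h
  · have h1 : (2 * n + 1) * a ≤ (2 * n + 1) * b + k := by nlinarith
    rw [min_eq_left h1, min_eq_left h, Nat.mul_div_cancel_left _ (by omega)]
  · have h1 : (2 * n + 1) * b + k < (2 * n + 1) * a := by nlinarith
    rw [min_eq_right h1.le, min_eq_right h.le, Nat.mul_add_div (by omega),
      Nat.div_eq_of_lt (by omega), Nat.add_zero]

/-- With entries bounded by `n` and `N = 2n + 1`, scaling `A₀ = N·A`, `B₀ = N·B`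
reduces `(max,min)`-convolution to `(max,min)`-skewed-convolution:
`⌊C₀[k]/N⌋ = max_{i+j=k} min{A[i], B[j]}`. -/
theorem scaling_reduction (n : ℕ) (A B : Fin (n + 1) → ℕ)
    (hA : ∀ i, A i ≤ n) (hB : ∀ j, B j ≤ n) (k : ℕ) (hk : k ≤ 2 * n) :
    ((Finset.univ.filter (fun p : Fin (n + 1) × Fin (n + 1) =>
          (p.1 : ℕ) + (p.2 : ℕ) = k)).sup
        (fun p => min ((2 * n + 1) * A p.1) ((2 * n + 1) * B p.2 + k))) / (2 * n + 1)
      = (Finset.univ.filter (fun p : Fin (n + 1) × Fin (n + 1) =>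
          (p.1 : ℕ) + (p.2 : ℕ) = k)).sup (fun p => min (A p.1) (B p.2)) := by
  set s := (Finset.univ.filter (fun p : Fin (n + 1) × Fin (n + 1) =>
          (p.1 : ℕ) + (p.2 : ℕ) = k)) with hs
  by_cases h : s.Nonempty
  · obtain ⟨p, hp, hval⟩ := Finset.exists_mem_eq_sup s h
      (fun p => min ((2 * n + 1) * A p.1) ((2 * n + 1) * B p.2 + k))
    apply le_antisymm
    · rw [hval, key_div n _ _ _ hk]
      exact Finset.le_sup (f := fun p => min (A p.1) (B p.2)) hp
    · apply Finset.sup_le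
      intro q hq
      rw [← key_div n (A q.1) (B q.2) k hk]
      exact Nat.div_le_div_right (Finset.le_sup (f := fun p => min ((2 * n + 1) * A p.1) ((2 * n + 1) * B p.2 + k)) hq)
  · rw [Finset.not_nonempty_iff_eq_empty] at h
    simp [h]
end

section
/- Any instance of the single-machine scheduling problem 1||Σ pⱼUⱼ has an optimal schedule that is EDD: all early jobs precede all tardy jobs, and early jobs are ordered by non-decreasing due dates. -/
/-- Completion time of job `j` in schedule `σ`: total processing time of jobs scheduled no
later than `j` (including `j`). -/
def completion (n : ℕ) (p : Fin n → ℕ) (σ : Equiv.Perm (Fin n)) (j : Fin n) : ℕ :=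
  ∑ i ∈ Finset.univ.filter (fun i => σ i ≤ σ j), p i

/-- Job `j` is tardy in `σ` if its completion time exceeds its due date. -/
def Tardy (n : ℕ) (p d : Fin n → ℕ) (σ : Equiv.Perm (Fin n)) (j : Fin n) : Prop :=
  d j < completion n p σ j

/-- The objective `Σ pⱼUⱼ`: total processing time of tardy jobs in `σ`. -/
def cost (n : ℕ) (p d : Fin n → ℕ) (σ : Equiv.Perm (Fin n)) : ℕ :=
  ∑ j ∈ Finset.univ.filter (fun j => d j < completion n p σ j), p j

section Aux
variable (n : ℕ) (p d : Fin n → ℕ) (S : Finset (Fin n))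

/-- Sorting key: members of `S` first, by due date (ties by index); non-members after. -/
def key (i : Fin n) : ℕ :=
  (if i ∈ S then 0 else 1) * ((Finset.univ.sup d + 1) * n)
    + (if i ∈ S then d i else 0) * n + i.val

lemma d_le_sup (i : Fin n) : d i ≤ Finset.univ.sup d := Finset.le_sup (Finset.mem_univ i)

lemma key_lt_of_mem_of_not_mem {i j : Fin n} (hi : i ∈ S) (hj : j ∉ S) :
    key n d S i < key n d S j := by
  unfold key
  simp only [hi, hj, if_pos, if_neg, if_true, if_false]
  have h1 : d i ≤ Finset.univ.sup d := d_le_sup n d i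
  have h2 : i.val < n := i.2
  nlinarith [i.2, j.2]

lemma pair_eq {n a b x y : ℕ} (hx : x < n) (hy : y < n)
    (h : a * n + x = b * n + y) : a = b ∧ x = y := by
  have h2 := congrArg (· % n) h
  simp only [Nat.add_comm (_ * n), Nat.add_mul_mod_self_right] at h2
  rw [Nat.mod_eq_of_lt hx, Nat.mod_eq_of_lt hy] at h2
  subst h2
  have h3 : a * n = b * n := by omega
  exact ⟨Nat.eq_of_mul_eq_mul_right (by omega) h3, rfl⟩

lemma key_bound (i : Fin n) :
    (if i ∈ S then d i else 0) * n + i.val < (Finset.univ.sup d + 1) * n := by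
  have h1 := d_le_sup n d i
  have h2 := i.2
  by_cases hi : i ∈ S <;> simp only [hi, if_true, if_false] <;> nlinarith

lemma key_inj {i j : Fin n} (h : key n d S i = key n d S j) : i = j := by
  unfold key at h
  rw [add_assoc, add_assoc] at h
  obtain ⟨-, h2⟩ := pair_eq (key_bound n d S i) (key_bound n d S j) h
  exact Fin.ext (pair_eq i.2 j.2 h2).2

lemma d_le_of_key_le {i j : Fin n} (hi : i ∈ S) (hj : j ∈ S)
    (h : key n d S i ≤ key n d S j) : d i ≤ d j := by
  unfold key at h
  simp only [hi, hj, if_true] at h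
  have h3 : i.val < n := i.2
  have h4 : j.val < n := j.2
  nlinarith

lemma mem_of_key_le {i j : Fin n} (hj : j ∈ S) (h : key n d S i ≤ key n d S j) :
    i ∈ S := by
  by_contra hi
  exact absurd h (not_le.mpr (key_lt_of_mem_of_not_mem n d S hj hi))

/-- The schedule that puts `S` first in EDD order, the rest after. -/
noncomputable def sched : Equiv.Perm (Fin n) := (Tuple.sort (key n d S))⁻¹

lemma sched_le_iff {i j : Fin n} :
    sched n d S i ≤ sched n d S j ↔ key n d S i ≤ key n d S j := by
  have hmono : StrictMono (key n d S ∘ Tuple.sort (key n d S)) := by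
    have := Tuple.monotone_sort (key n d S)
    refine this.strictMono_of_injective ?_
    exact fun a b hab => (Tuple.sort (key n d S)).injective
      (key_inj n d S hab)
  constructor
  · intro h
    have := hmono.le_iff_le.mpr h
    simpa [sched, Function.comp] using this
  · intro h
    have h2 : (key n d S ∘ Tuple.sort (key n d S)) (sched n d S i)
        ≤ (key n d S ∘ Tuple.sort (key n d S)) (sched n d S j) := by
      simpa [sched, Function.comp] using h
    exact hmono.le_iff_le.mp h2

lemma completion_sched (j : Fin n) :
    completion n p (sched n d S) j
      = ∑ i ∈ Finset.univ.filter (fun i => key n d S i ≤ key n d S j), p i := by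
  unfold completion
  congr 1
  apply Finset.filter_congr
  intro i _
  simp [sched_le_iff]

/-- If every job of `S` is early in some schedule `σ`, then every job of `S` is early
in `sched S`. -/
lemma early_sched (σ : Equiv.Perm (Fin n)) (hS : ∀ i ∈ S, ¬ Tardy n p d σ i)
    {j : Fin n} (hj : j ∈ S) : ¬ Tardy n p d (sched n d S) j := by
  unfold Tardy
  rw [completion_sched, not_lt]
  set P : Finset (Fin n) := Finset.univ.filter (fun i => key n d S i ≤ key n d S j) with hP
  have hPne : P.Nonempty := ⟨j, by simp [hP]⟩
  obtain ⟨i, hiP, hmax⟩ := P.exists_max_image (fun l => (σ l : ℕ)) hPne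
  have hiP' : key n d S i ≤ key n d S j := (Finset.mem_filter.mp hiP).2
  have hiS : i ∈ S := mem_of_key_le n d S hj hiP'
  have h1 : ∑ l ∈ P, p l ≤ completion n p σ i := by
    apply Finset.sum_le_sum_of_subset
    intro l hl
    simp only [Finset.mem_filter, Finset.mem_univ, true_and]
    exact_mod_cast hmax l hl
  have h2 : completion n p σ i ≤ d i := not_lt.mp (hS i hiS)
  have h3 : d i ≤ d j := d_le_of_key_le n d S hiS hj hiP'
  omega

end Aux

/-- If the early set grows (as a set), the cost does not increase. -/
lemma cost_le_of_early_subset (n : ℕ) (p d : Fin n → ℕ) (σ τ : Equiv.Perm (Fin n))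
    (h : ∀ j, ¬ Tardy n p d σ j → ¬ Tardy n p d τ j) :
    cost n p d τ ≤ cost n p d σ := by
  unfold cost
  apply Finset.sum_le_sum_of_subset
  intro j hj
  simp only [Finset.mem_filter, Finset.mem_univ, true_and] at hj ⊢
  by_contra hσ
  exact h j (by simpa [Tardy] using hσ) (by simpa [Tardy] using hj) |>.elim


/-- Every instance of `1||Σ pⱼUⱼ` has an optimal schedule that is EDD: all
early jobs precede all tardy jobs, and early jobs appear in non-decreasing order of
due date. -/
theorem exists_optimal_EDD (n : ℕ) (p d : Fin n → ℕ) :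
    ∃ σ : Equiv.Perm (Fin n),
      (∀ τ : Equiv.Perm (Fin n), cost n p d σ ≤ cost n p d τ) ∧
      (∀ i j : Fin n, ¬ Tardy n p d σ i → Tardy n p d σ j → σ i < σ j) ∧
      (∀ i j : Fin n, ¬ Tardy n p d σ i → ¬ Tardy n p d σ j → σ i < σ j → d i ≤ d j) := by
  classical
  -- early set of a schedule
  set E : Equiv.Perm (Fin n) → Finset (Fin n) :=
    fun σ => Finset.univ.filter (fun j => ¬ Tardy n p d σ j) with hE
  -- set of optimal schedules
  set A : Finset (Equiv.Perm (Fin n)) :=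
    Finset.univ.filter (fun σ => ∀ τ, cost n p d σ ≤ cost n p d τ) with hA
  have hAne : A.Nonempty := by
    obtain ⟨σ, -, hσ⟩ := Finset.exists_min_image Finset.univ (cost n p d)
      ⟨1, Finset.mem_univ 1⟩
    exact ⟨σ, by simp [hA]; intro τ; exact hσ τ (Finset.mem_univ τ)⟩
  obtain ⟨σ, hσA, hmax⟩ := A.exists_max_image (fun σ => (E σ).card) hAne
  have hσopt : ∀ τ, cost n p d σ ≤ cost n p d τ := by
    simpa [hA] using (Finset.mem_filter.mp hσA).2
  set S : Finset (Fin n) := E σ with hS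
  set ρ : Equiv.Perm (Fin n) := sched n d S with hρ
  have hSearly : ∀ i ∈ S, ¬ Tardy n p d σ i := by
    intro i hi; exact (Finset.mem_filter.mp hi).2
  have hsub : ∀ j ∈ S, ¬ Tardy n p d ρ j :=
    fun j hj => early_sched n p d S σ hSearly hj
  have hρcost : ∀ τ, cost n p d ρ ≤ cost n p d τ := by
    intro τ
    refine le_trans ?_ (hσopt τ)
    apply cost_le_of_early_subset
    intro j hj
    exact hsub j (by simp [hS, hE, hj])
  have hρA : ρ ∈ A := by
    simp only [hA, Finset.mem_filter, Finset.mem_univ, true_and]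
    exact hρcost
  -- E ρ = S
  have hES : E ρ = S := by
    apply (Finset.eq_of_subset_of_card_le ?_ ?_).symm
    · intro j hj
      simp only [hE, Finset.mem_filter, Finset.mem_univ, true_and]
      exact hsub j hj
    · exact hmax ρ hρA
  have hEarly_iff : ∀ j, ¬ Tardy n p d ρ j ↔ j ∈ S := by
    intro j
    rw [← hES]
    simp [hE]
  refine ⟨ρ, hρcost, ?_, ?_⟩
  · intro i j hi hj
    have hiS : i ∈ S := (hEarly_iff i).mp hi
    have hjS : j ∉ S := fun h => (hEarly_iff j).mpr h hj
    have hk : key n d S i < key n d S j := key_lt_of_mem_of_not_mem n d S hiS hjS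
    have : ¬ (ρ j ≤ ρ i) := by
      rw [hρ, sched_le_iff]
      exact not_le.mpr hk
    exact not_le.mp this
  · intro i j hi hj hij
    have hiS : i ∈ S := (hEarly_iff i).mp hi
    have hjS : j ∈ S := (hEarly_iff j).mp hj
    have : key n d S i ≤ key n d S j := by
      rw [← sched_le_iff (n := n) (d := d) (S := S)]
      exact le_of_lt hij
    exact d_le_of_key_le n d S hiS hjS this
end

section
/- Define S₀ = {0} and, for i = 1,…,m, Sᵢ = {x ∈ S_{i−1} ⊕ 𝒮(Xᵢ) : x ≤ d⁽ⁱ⁾}, where Xᵢ is the multiset of processing times of jobs with due date d⁽ⁱ⁾. Then x ∈ Sᵢ if and only if there exist subsets E₁ ⊆ J₁, …, Eᵢ ⊆ Jᵢ with Σ_{j ∈ ⋃_{ℓ≤i} E_ℓ} pⱼ = x and Σ_{ℓ ≤ i₀} Σ_{j ∈ E_ℓ} pⱼ ≤ d⁽ⁱ⁰⁾ for every i₀ ∈ {1,…,i}. -/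
/-- The set of all sub-multiset sums of a multiset of natural numbers. -/
def subsetSums (X : Multiset ℕ) : Set ℕ := {s | ∃ Y ≤ X, Y.sum = s}

/-- The SumsetScheduler recursion: `S₀ = {0}` and
`Sᵢ = {x ∈ S_{i−1} ⊕ 𝒮(Xᵢ) : x ≤ d⁽ⁱ⁾}` (due dates and processing-time multisets
indexed `1,…,m`). -/
def Srec (d : ℕ → ℕ) (X : ℕ → Multiset ℕ) : ℕ → Set ℕ
  | 0 => {0}
  | i + 1 => {x | (∃ a ∈ Srec d X i, ∃ b ∈ subsetSums (X (i + 1)), x = a + b) ∧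
      x ≤ d (i + 1)}


lemma le_map_exists {α β : Type*} [DecidableEq α] [DecidableEq β] (f : α → β) :
    ∀ (s : Multiset α) (Y : Multiset β), Y ≤ s.map f → ∃ t ≤ s, t.map f = Y := by
  intro s
  induction s using Multiset.induction with
  | empty => intro Y hY; simp at hY; exact ⟨0, le_refl _, by simp [hY]⟩
  | cons a s ih =>
    intro Y hY
    rw [Multiset.map_cons] at hY
    by_cases h : f a ∈ Y
    · have h1 : Y.erase (f a) ≤ s.map f := by
        rw [Multiset.erase_le_iff_le_cons]; exact hY
      obtain ⟨t, ht, htm⟩ := ih _ h1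
      refine ⟨a ::ₘ t, Multiset.cons_le_cons _ ht, ?_⟩
      rw [Multiset.map_cons, htm, Multiset.cons_erase h]
    · rw [Multiset.le_cons_of_notMem h] at hY
      obtain ⟨t, ht, htm⟩ := ih _ hY
      exact ⟨t, le_trans ht (Multiset.le_cons_self _ _), htm⟩

lemma subsetSums_char (n : ℕ) (p : Fin n → ℕ) (cls : Fin n → ℕ) (i b : ℕ) :
    (∃ Y ≤ Multiset.map p (Finset.univ.filter (fun j => cls j = i)).val, Y.sum = b) ↔
      ∃ E : Finset (Fin n), (∀ j ∈ E, cls j = i) ∧ ∑ j ∈ E, p j = b := by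
  constructor
  · rintro ⟨Y, hY, rfl⟩
    obtain ⟨t, ht, rfl⟩ := le_map_exists p _ Y hY
    have hnd : t.Nodup := Multiset.nodup_of_le ht (Finset.univ.filter (fun j => cls j = i)).nodup
    refine ⟨⟨t, hnd⟩, ?_, ?_⟩
    · intro j hj
      have : j ∈ Finset.univ.filter (fun j => cls j = i) :=
        Multiset.mem_of_le ht (by simpa using hj)
      simpa using this
    · rfl
  · rintro ⟨E, hE, rfl⟩
    refine ⟨Multiset.map p E.val, Multiset.map_le_map ?_, ?_⟩
    · exact Finset.val_le_iff.mpr fun j hj => by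
        simp only [Finset.mem_filter, Finset.mem_univ, true_and]; exact hE j hj
    · rfl

lemma Srec_char_aux (n : ℕ) (p : Fin n → ℕ) (d : ℕ → ℕ)
    (cls : Fin n → ℕ) (X : ℕ → Multiset ℕ)
    (hX : ∀ i, X i = Multiset.map p (Finset.univ.filter (fun j => cls j = i)).val) :
    ∀ i x, x ∈ Srec d X i ↔
      ∃ E : ℕ → Finset (Fin n),
        (∀ ℓ : ℕ, ∀ j ∈ E ℓ, cls j = ℓ) ∧
        (∑ ℓ ∈ Finset.Icc 1 i, ∑ j ∈ E ℓ, p j = x) ∧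
        (∀ i₀ ∈ Set.Icc 1 i, ∑ ℓ ∈ Finset.Icc 1 i₀, ∑ j ∈ E ℓ, p j ≤ d i₀) := by
  intro i
  induction i with
  | zero =>
    intro x
    simp only [Srec, Set.mem_singleton_iff]
    constructor
    · rintro rfl
      exact ⟨fun _ => ∅, by simp, by simp, by simp⟩
    · rintro ⟨E, _, hsum, _⟩
      simp at hsum; omega
  | succ i ih =>
    intro x
    simp only [Srec, Set.mem_setOf_eq]
    constructor
    · rintro ⟨⟨a, ha, b, hb, rfl⟩, hle⟩
      obtain ⟨Ea, hEa, hasum, hapar⟩ := (ih a).mp ha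
      rw [subsetSums, Set.mem_setOf_eq, hX (i+1)] at hb
      obtain ⟨Eb, hEb, hbsum⟩ := (subsetSums_char n p cls (i+1) b).mp hb
      refine ⟨Function.update Ea (i+1) Eb, ?_, ?_, ?_⟩
      · intro ℓ j hj
        rcases eq_or_ne ℓ (i+1) with rfl | hne
        · rw [Function.update_self] at hj; exact hEb j hj
        · rw [Function.update_of_ne hne] at hj; exact hEa ℓ j hj
      · rw [Finset.sum_Icc_succ_top (by omega : 1 ≤ i + 1)]
        rw [Function.update_self,
          Finset.sum_congr rfl (fun ℓ hℓ => by
            rw [Function.update_of_ne (by simp at hℓ; omega)]),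
          hasum, hbsum]
      · intro i₀ hi₀
        simp only [Set.mem_Icc] at hi₀
        rcases eq_or_lt_of_le hi₀.2 with rfl | hlt
        · rw [Finset.sum_Icc_succ_top (by omega : 1 ≤ i + 1), Function.update_self,
            Finset.sum_congr rfl (fun ℓ hℓ => by
              rw [Function.update_of_ne (by simp at hℓ; omega)]),
            hasum, hbsum]
          exact hle
        · rw [Finset.sum_congr rfl (fun ℓ hℓ => by
              rw [Function.update_of_ne (by simp at hℓ; omega)])]
          exact hapar i₀ (Set.mem_Icc.mpr ⟨hi₀.1, by omega⟩)
    · rintro ⟨E, hE, hsum, hpar⟩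
      rw [Finset.sum_Icc_succ_top (by omega : 1 ≤ i + 1)] at hsum
      refine ⟨⟨∑ ℓ ∈ Finset.Icc 1 i, ∑ j ∈ E ℓ, p j, ?_, ∑ j ∈ E (i+1), p j, ?_, hsum.symm⟩, ?_⟩
      · exact (ih _).mpr ⟨E, hE, rfl, fun i₀ hi₀ => hpar i₀
          (Set.mem_Icc.mpr ⟨(Set.mem_Icc.mp hi₀).1, by
            have := (Set.mem_Icc.mp hi₀).2; omega⟩)⟩
      · rw [subsetSums, Set.mem_setOf_eq, hX (i+1)]
        exact (subsetSums_char n p cls (i+1) _).mpr ⟨E (i+1), hE (i+1), rfl⟩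
      · have := hpar (i+1) (Set.mem_Icc.mpr ⟨by omega, le_refl _⟩)
        rw [Finset.sum_Icc_succ_top (by omega : 1 ≤ i + 1)] at this
        omega

/-- `x ∈ Sᵢ` iff there exist `E₁ ⊆ J₁, …, Eᵢ ⊆ Jᵢ` with
`Σ_{j ∈ ⋃_{ℓ≤i} E_ℓ} pⱼ = x` and `Σ_{ℓ ≤ i₀} Σ_{j ∈ E_ℓ} pⱼ ≤ d⁽ⁱ⁰⁾` for every
`i₀ ∈ {1,…,i}`. Here `cls j ∈ {1,…,m}` is the due-date class of job `j` and
`Xᵢ = {pⱼ : cls j = i}` as a multiset. -/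
theorem Srec_characterization (n m : ℕ) (p : Fin n → ℕ) (d : ℕ → ℕ)
    (hd : StrictMonoOn d (Set.Icc 1 m))
    (cls : Fin n → ℕ) (hcls : ∀ j, cls j ∈ Set.Icc 1 m)
    (X : ℕ → Multiset ℕ)
    (hX : ∀ i, X i = Multiset.map p (Finset.univ.filter (fun j => cls j = i)).val)
    (i : ℕ) (hi : i ∈ Set.Icc 1 m) (x : ℕ) :
    x ∈ Srec d X i ↔
      ∃ E : ℕ → Finset (Fin n),
        (∀ ℓ : ℕ, ∀ j ∈ E ℓ, cls j = ℓ) ∧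
        (∑ ℓ ∈ Finset.Icc 1 i, ∑ j ∈ E ℓ, p j = x) ∧
        (∀ i₀ ∈ Set.Icc 1 i, ∑ ℓ ∈ Finset.Icc 1 i₀, ∑ j ∈ E ℓ, p j ≤ d i₀) := by
  exact Srec_char_aux n p d cls X hX i x
end

section
/- For any schedule σ of jobs J and the associated set E of early jobs, the jobs of E can be rescheduled consecutively from time 0 in non-decreasing order of due date so that all of them remain early; consequently a set E ⊆ J can be the set of early jobs of some schedule if and only if, when E = {j₁,…,j_r} is ordered with d_{j₁} ≤ ⋯ ≤ d_{j_r}, the prefix sums satisfy Σ_{t ≤ s} p_{j_t} ≤ d_{j_s} for all s. -/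
/-- The EDD prefix-sum feasibility condition for a set `E` of jobs: when `E` is ordered by
non-decreasing due date, every prefix sum of processing times is at most the corresponding
due date. Equivalently (handling ties), for every `j ∈ E` the total processing time of
jobs of `E` with due date at most `d j` is at most `d j`. -/
def eddFeasible (n : ℕ) (p d : Fin n → ℕ) (E : Finset (Fin n)) : Prop :=
  ∀ j ∈ E, ∑ j' ∈ E.filter (fun j' => d j' ≤ d j), p j' ≤ d j

def earlyJobs (n : ℕ) (p d : Fin n → ℕ) (σ : Equiv.Perm (Fin n)) : Finset (Fin n) :=
  Finset.univ.filter fun j => completion n p σ j ≤ d j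

theorem Equiv.Perm.exists_le_imp_le {n : ℕ} {α : Type*} [LinearOrder α] (f : Fin n → α) :
    ∃ σ : Equiv.Perm (Fin n), ∀ i j, σ i ≤ σ j → f i ≤ f j := by
  refine ⟨(Tuple.sort f)⁻¹, fun i j hij => ?_⟩
  simpa [Equiv.Perm.inv_def] using Tuple.monotone_sort f hij

section Completion

variable {n : ℕ} (p : Fin n → ℕ) (σ : Equiv.Perm (Fin n))

theorem completion_le_sum_of_subset {j : Fin n} {S : Finset (Fin n)}
    (h : ∀ i, σ i ≤ σ j → i ∈ S) : completion n p σ j ≤ ∑ i ∈ S, p i :=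
  Finset.sum_le_sum_of_subset fun i hi => h i (Finset.mem_filter.mp hi).2

theorem sum_le_completion_of_forall_le {k : Fin n} {S : Finset (Fin n)}
    (h : ∀ i ∈ S, σ i ≤ σ k) : ∑ i ∈ S, p i ≤ completion n p σ k :=
  Finset.sum_le_sum_of_subset fun i hi => Finset.mem_filter.mpr ⟨Finset.mem_univ i, h i hi⟩

end Completion

theorem eddFeasible.mono {n : ℕ} {p d : Fin n → ℕ} {E F : Finset (Fin n)}
    (hF : eddFeasible n p d F) (hEF : E ⊆ F) : eddFeasible n p d E := fun j hj =>
  (Finset.sum_le_sum_of_subset (Finset.filter_subset_filter _ hEF)).trans (hF j (hEF hj))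

/-- Among the early jobs due by `d j`, the one scheduled last completes after all of them,
and it is early with due date at most `d j`. -/
theorem eddFeasible_earlyJobs (n : ℕ) (p d : Fin n → ℕ) (σ : Equiv.Perm (Fin n)) :
    eddFeasible n p d (earlyJobs n p d σ) := by
  intro j hj
  set F := (earlyJobs n p d σ).filter fun i => d i ≤ d j
  obtain ⟨k, hkF, hk_last⟩ :=
    F.exists_max_image σ ⟨j, Finset.mem_filter.mpr ⟨hj, le_rfl⟩⟩
  obtain ⟨hk_early, hk_due⟩ := Finset.mem_filter.mp hkF
  calc ∑ i ∈ F, p i ≤ completion n p σ k := sum_le_completion_of_forall_le p σ hk_last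
    _ ≤ d k := (Finset.mem_filter.mp hk_early).2
    _ ≤ d j := hk_due

/-- Schedule the jobs of `E` first, in order of due date: the jobs up to and including
`j ∈ E` are then jobs of `E` due no later than `j`. -/
theorem exists_perm_completion_le_of_eddFeasible {n : ℕ} {p d : Fin n → ℕ}
    {E : Finset (Fin n)} (hE : eddFeasible n p d E) :
    ∃ σ : Equiv.Perm (Fin n), ∀ j ∈ E, completion n p σ j ≤ d j := by
  classical
  obtain ⟨σ, hσ⟩ :=
    Equiv.Perm.exists_le_imp_le fun i => if i ∈ E then (d i : WithTop ℕ) else ⊤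
  refine ⟨σ, fun j hj => (completion_le_sum_of_subset p σ fun i hij => ?_).trans (hE j hj)⟩
  have hkey := hσ i j hij
  by_cases hi : i ∈ E
  · exact Finset.mem_filter.mpr ⟨hi, by simpa [hi, hj] using hkey⟩
  · simp [hi, hj] at hkey

/-- For any schedule `σ`, its set of early jobs satisfies the EDD prefix-sum
condition (so its jobs can be rescheduled consecutively from time `0` in non-decreasing
due-date order, all remaining early); consequently, a set `E` can be a set of early jobs of
some schedule iff the prefix-sum condition holds for `E`. -/
theorem early_set_characterization (n : ℕ) (p d : Fin n → ℕ) :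
    (∀ σ : Equiv.Perm (Fin n),
        eddFeasible n p d
          (Finset.univ.filter (fun j => completion n p σ j ≤ d j))) ∧
      (∀ E : Finset (Fin n),
        (∃ σ : Equiv.Perm (Fin n), ∀ j ∈ E, completion n p σ j ≤ d j) ↔
          eddFeasible n p d E) := by
  refine ⟨eddFeasible_earlyJobs n p d, fun E => ⟨fun ⟨σ, hσ⟩ => ?_, fun hE => ?_⟩⟩
  · exact (eddFeasible_earlyJobs n p d σ).mono fun j hj =>
      Finset.mem_filter.mpr ⟨Finset.mem_univ j, hσ j hj⟩
  · exact exists_perm_completion_le_of_eddFeasible hE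
end
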